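/- arXiv:1601.06013 — 4 statements merged into one kernel-verified Lean document; each statement's English description precedes it below -/
import Mathlib

section
/- Let 0 < α < 1 and K₀ > 1, and let A be an invertible 2×2 real matrix with entries A₁₁, A₁₂, A₂₁, A₂₂ satisfying (H3) |A₁₂| + α|A₂₂| + α²|A₂₁| ≤ α|A₁₁| and (H4) |A₁₁| − α|A₂₁| ≥ |det A|·K₀. Then A⁻¹ maps the stable cone K_α^s into itself, and every v ∈ K_α^s satisfies |A⁻¹v|_∞ ≥ K₀|v|_∞. -/
/-- Proposition 2.1 (stable cone part): for an invertible matrix `A` (playing the role of `DF`,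
with entries `A₁₁ = F₁ₓ`, `A₁₂ = F₁ᵧ`, `A₂₁ = F₂ₓ`, `A₂₂ = F₂ᵧ`), conditions H3 and H4 imply
that `A⁻¹` maps the stable cone `K_α^s = {|v₁| ≤ α|v₂|}` into itself and expands every vector
in it by a factor at least `K₀` in the max norm.  Here
`A⁻¹ v = ((A₂₂ v₁ - A₁₂ v₂)/det A, (A₁₁ v₂ - A₂₁ v₁)/det A)`. -/
theorem stable_cone_invariance_and_expansion
    (α K₀ : ℝ) (hα0 : 0 < α) (hα1 : α < 1) (hK : 1 < K₀)
    (A11 A12 A21 A22 : ℝ)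
    (hdet : A11 * A22 - A12 * A21 ≠ 0)
    (hH3 : |A12| + α * |A22| + α ^ 2 * |A21| ≤ α * |A11|)
    (hH4 : |A11 * A22 - A12 * A21| * K₀ ≤ |A11| - α * |A21|) :
    ∀ v : ℝ × ℝ, |v.1| ≤ α * |v.2| →
      |(A22 * v.1 - A12 * v.2) / (A11 * A22 - A12 * A21)|
          ≤ α * |(A11 * v.2 - A21 * v.1) / (A11 * A22 - A12 * A21)| ∧
      K₀ * max |v.1| |v.2|
          ≤ max |(A22 * v.1 - A12 * v.2) / (A11 * A22 - A12 * A21)|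
              |(A11 * v.2 - A21 * v.1) / (A11 * A22 - A12 * A21)| := by
  intro v hv
  have hdpos : 0 < |A11 * A22 - A12 * A21| := abs_pos.mpr hdet
  have hv2 : |v.1| ≤ |v.2| := hv.trans (by nlinarith [abs_nonneg v.2])
  have hmax : max |v.1| |v.2| = |v.2| := max_eq_right hv2
  have ht1 : |A22 * v.1 - A12 * v.2| ≤ |A22| * |v.1| + |A12| * |v.2| := by
    calc |A22 * v.1 - A12 * v.2| ≤ |A22 * v.1| + |A12 * v.2| := abs_sub _ _
    _ = |A22| * |v.1| + |A12| * |v.2| := by rw [abs_mul, abs_mul]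
  have ht2 : |A11| * |v.2| - |A21| * |v.1| ≤ |A11 * v.2 - A21 * v.1| := by
    calc |A11| * |v.2| - |A21| * |v.1| = |A11 * v.2| - |A21 * v.1| := by
          rw [abs_mul, abs_mul]
    _ ≤ |A11 * v.2 - A21 * v.1| := abs_sub_abs_le_abs_sub _ _
  have h1 : |A22 * v.1 - A12 * v.2| ≤ α * |A11 * v.2 - A21 * v.1| := by
    have e1 := mul_le_mul_of_nonneg_left hv (abs_nonneg A22)
    have e2 := mul_le_mul_of_nonneg_right hH3 (abs_nonneg v.2)
    have e3 := mul_le_mul_of_nonneg_left hv (mul_nonneg hα0.le (abs_nonneg A21))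
    nlinarith [ht1, ht2]
  have h2 : |A11 * A22 - A12 * A21| * (K₀ * |v.2|) ≤ |A11 * v.2 - A21 * v.1| := by
    nlinarith [abs_nonneg v.2, abs_nonneg v.1, abs_nonneg A21]
  constructor
  · rw [abs_div, abs_div, ← mul_div_assoc]
    exact div_le_div_of_nonneg_right h1 hdpos.le
  · rw [hmax, abs_div, abs_div]
    have : K₀ * |v.2| ≤ |A11 * v.2 - A21 * v.1| / |A11 * A22 - A12 * A21| :=
      (le_div_iff₀ hdpos).mpr (by linarith [h2])
    exact this.trans (le_max_right _ _)
end

section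
/- Let 0 < α < 1 and K₀ > 1, and let A be an invertible 2×2 real matrix with entries A₁₁, A₁₂, A₂₁, A₂₂ satisfying (H1) |A₂₁| + α|A₂₂| + α²|A₁₂| ≤ α|A₁₁|, (H2) |A₁₁| − α|A₁₂| ≥ K₀, (H3) |A₁₂| + α|A₂₂| + α²|A₂₁| ≤ α|A₁₁|, and (H4) |A₁₁| − α|A₂₁| ≥ |det A|·K₀. Then (i) |A₁₂| ≤ α|A₁₁|, (ii) |A₂₁| ≤ α|A₁₁|, and (iii) |A₂₂| ≤ (1/K₀² + α²)·|A₁₁|. -/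
/-!
The off-diagonal bounds are read off from H1 and H3 by dropping nonnegative terms, and H2 gives
`K₀ ≤ |A₁₁|`. For `A₂₂`, write `A₁₁ A₂₂ = det A + A₁₂ A₂₁`: H4 gives `|det A| ≤ |A₁₁| / K₀`, which is
at most `|A₁₁|² / K₀²` because `|A₁₁| / K₀ ≥ 1`, while `|A₁₂| |A₂₁| ≤ α² |A₁₁|²`; dividing by `|A₁₁|`
gives the bound.
-/

theorem abs_mul_le_abs_sub_add_abs_mul {R : Type*} [CommRing R] [LinearOrder R]
    [IsStrictOrderedRing R] (a b c d : R) :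
    |a * d| ≤ |a * d - b * c| + |b| * |c| := by
  rw [← abs_mul]
  linarith [abs_sub_abs_le_abs_sub (a * d) (b * c)]

theorem div_le_sq_div_sq {K : Type*} [Field K] [LinearOrder K] [IsStrictOrderedRing K]
    {x y : K} (hy : 0 < y) (hyx : y ≤ x) :
    x / y ≤ x ^ 2 / y ^ 2 := by
  rw [← div_pow]
  exact le_self_pow₀ ((one_le_div hy).2 hyx) two_ne_zero

theorem abs_le_of_abs_det_le {R : Type*} [CommRing R] [LinearOrder R] [IsStrictOrderedRing R]
    {a b c d ε β : R} (ha : 0 < |a|) (hdet : |a * d - b * c| ≤ ε * |a| ^ 2)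
    (hbc : |b| * |c| ≤ β * |a| ^ 2) :
    |d| ≤ (ε + β) * |a| := by
  refine le_of_mul_le_mul_left ?_ ha
  calc |a| * |d| = |a * d| := (abs_mul a d).symm
    _ ≤ |a * d - b * c| + |b| * |c| := abs_mul_le_abs_sub_add_abs_mul a b c d
    _ ≤ ε * |a| ^ 2 + β * |a| ^ 2 := add_le_add hdet hbc
    _ = |a| * ((ε + β) * |a|) := by ring

theorem entry_estimates_general
    (α K₀ : ℝ) (hα0 : 0 < α) (hK : 1 < K₀)
    (A11 A12 A21 A22 : ℝ)
    (hH1 : |A21| + α * |A22| + α ^ 2 * |A12| ≤ α * |A11|)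
    (hH2 : K₀ ≤ |A11| - α * |A12|)
    (hH3 : |A12| + α * |A22| + α ^ 2 * |A21| ≤ α * |A11|)
    (hH4 : |A11 * A22 - A12 * A21| * K₀ ≤ |A11| - α * |A21|) :
    |A12| ≤ α * |A11| ∧ |A21| ≤ α * |A11| ∧
    |A22| ≤ (1 / K₀ ^ 2 + α ^ 2) * |A11| := by
  have hK₀ : 0 < K₀ := zero_lt_one.trans hK
  have h12 : |A12| ≤ α * |A11| := by
    have : 0 ≤ α * |A22| + α ^ 2 * |A21| := by positivity
    linarith
  have h21 : |A21| ≤ α * |A11| := by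
    have : 0 ≤ α * |A22| + α ^ 2 * |A12| := by positivity
    linarith
  have hK₀_le : K₀ ≤ |A11| := by
    have : 0 ≤ α * |A12| := by positivity
    linarith
  have hdet : |A11 * A22 - A12 * A21| ≤ 1 / K₀ ^ 2 * |A11| ^ 2 := by
    have : 0 ≤ α * |A21| := by positivity
    rw [one_div_mul_eq_div]
    refine le_trans ((le_div_iff₀ hK₀).2 (by linarith)) (div_le_sq_div_sq hK₀ hK₀_le)
  have hoff : |A12| * |A21| ≤ α ^ 2 * |A11| ^ 2 :=
    calc |A12| * |A21| ≤ (α * |A11|) * (α * |A11|) := by gcongr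
      _ = α ^ 2 * |A11| ^ 2 := by ring
  exact ⟨h12, h21, abs_le_of_abs_det_le (hK₀.trans_le hK₀_le) hdet hoff⟩

/-- The basic consequences of the hyperbolicity conditions H1–H4 for a matrix `A` (with entries
playing the roles of the partial derivatives `F₁ₓ, F₁ᵧ, F₂ₓ, F₂ᵧ`):
`|F₁ᵧ| ≤ α|F₁ₓ|`, `|F₂ₓ| ≤ α|F₁ₓ|` and `|F₂ᵧ| ≤ (1/K₀² + α²)|F₁ₓ|`. -/
theorem entry_estimates
    (α K₀ : ℝ) (hα0 : 0 < α) (hα1 : α < 1) (hK : 1 < K₀)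
    (A11 A12 A21 A22 : ℝ)
    (hdet : A11 * A22 - A12 * A21 ≠ 0)
    (hH1 : |A21| + α * |A22| + α ^ 2 * |A12| ≤ α * |A11|)
    (hH2 : K₀ ≤ |A11| - α * |A12|)
    (hH3 : |A12| + α * |A22| + α ^ 2 * |A21| ≤ α * |A11|)
    (hH4 : |A11 * A22 - A12 * A21| * K₀ ≤ |A11| - α * |A21|) :
    |A12| ≤ α * |A11| ∧ |A21| ≤ α * |A11| ∧
    |A22| ≤ (1 / K₀ ^ 2 + α ^ 2) * |A11| :=
  entry_estimates_general α K₀ hα0 hK A11 A12 A21 A22 hH1 hH2 hH3 hH4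
end

section
/- Assume the SETUP with the f_i of class C², conditions G1–G3, H1–H5, and the distortion condition (D2) sup_i sup_{z∈E_i} |D²f_i(z)|/|f_{i1x}(z)| < C₀, where |D²f_i(z)| is the maximum of the absolute values of all second-order partial derivatives of f_{i1} and f_{i2} at z. Then there exists a constant c > 0, independent of i, such that for every i and all z₁, z₂ ∈ E_i, |∂f_{i1}/∂x (z₁)| ≤ c·|∂f_{i1}/∂x (z₂)|. -/
open MeasureTheory Set Filter Topology

noncomputable section

/-- The unit square `Q = [0,1] × [0,1]`. -/
def Q2 : Set (ℝ × ℝ) := Set.Icc (0:ℝ) 1 ×ˢ Set.Icc (0:ℝ) 1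

/-- The full-height curvilinear rectangle `E_i` with left/right boundaries `l i`, `r i`. -/
def Erect (l r : ℕ → ℝ → ℝ) (i : ℕ) : Set (ℝ × ℝ) :=
  {p : ℝ × ℝ | p.2 ∈ Set.Icc (0:ℝ) 1 ∧ l i p.2 ≤ p.1 ∧ p.1 ≤ r i p.2}

/-- The full-width strip `S_i` with bottom/top boundaries `b i`, `t i`. -/
def Sstrip (b t : ℕ → ℝ → ℝ) (i : ℕ) : Set (ℝ × ℝ) :=
  {p : ℝ × ℝ | p.1 ∈ Set.Icc (0:ℝ) 1 ∧ b i p.1 ≤ p.2 ∧ p.2 ≤ t i p.1}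

/-- The map `f_i = (f_{i1}, f_{i2})` as a map `ℝ² → ℝ²`. -/
def fv (f1 f2 : ℕ → ℝ × ℝ → ℝ) (i : ℕ) (p : ℝ × ℝ) : ℝ × ℝ := (f1 i p, f2 i p)

/-- Partial derivative in the `x`-direction. -/
def Dx (g : ℝ × ℝ → ℝ) (z : ℝ × ℝ) : ℝ := deriv (fun s => g (s, z.2)) z.1

/-- Partial derivative in the `y`-direction. -/
def Dy (g : ℝ × ℝ → ℝ) (z : ℝ × ℝ) : ℝ := deriv (fun s => g (z.1, s)) z.2

/-- Absolute value of the Jacobian determinant of `f_i`. -/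
def Jac (f1 f2 : ℕ → ℝ × ℝ → ℝ) (i : ℕ) (z : ℝ × ℝ) : ℝ :=
  |Dx (f1 i) z * Dy (f2 i) z - Dy (f1 i) z * Dx (f2 i) z|

/-- Maximum of the absolute values of the second-order partial derivatives of `f_i`. -/
def D2max (f1 f2 : ℕ → ℝ × ℝ → ℝ) (i : ℕ) (z : ℝ × ℝ) : ℝ :=
  max (max (max |Dx (Dx (f1 i)) z| |Dy (Dx (f1 i)) z|)
           (max |Dy (Dy (f1 i)) z| |Dx (Dx (f2 i)) z|))
      (max |Dy (Dx (f2 i)) z| |Dy (Dy (f2 i)) z|)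

/-- `δ_{i,max}`: maximal width of a horizontal cross-section of `E_i`. -/
def deltaMax (l r : ℕ → ℝ → ℝ) (i : ℕ) : ℝ :=
  sSup ((fun y => r i y - l i y) '' Set.Icc (0:ℝ) 1)

/-- `δ_{i,min}`: minimal width of a horizontal cross-section of `E_i`. -/
def deltaMin (l r : ℕ → ℝ → ℝ) (i : ℕ) : ℝ :=
  sInf ((fun y => r i y - l i y) '' Set.Icc (0:ℝ) 1)

/-- `E_{i₀ … i_{n-1}} = E_{i₀} ∩ f_{i₀}⁻¹ (E_{i₁ … i_{n-1}})`. -/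
def Efin (l r : ℕ → ℝ → ℝ) (f1 f2 : ℕ → ℝ × ℝ → ℝ) : (ℕ → ℕ) → ℕ → Set (ℝ × ℝ)
  | _, 0 => Set.univ
  | idx, n + 1 =>
      Erect l r (idx 0) ∩ fv f1 f2 (idx 0) ⁻¹' Efin l r f1 f2 (fun k => idx (k + 1)) n

/-- `S_{i₋ₘ … i₋₁} = f_{i₋₁} (S_{i₋ₘ … i₋₂} ∩ E_{i₋₁})`; here `j 0 = i₋₁`, `j 1 = i₋₂`, …. -/
def Sfin (l r : ℕ → ℝ → ℝ) (f1 f2 : ℕ → ℝ × ℝ → ℝ) : (ℕ → ℕ) → ℕ → Set (ℝ × ℝ)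
  | _, 0 => Set.univ
  | j, m + 1 =>
      fv f1 f2 (j 0) '' (Sfin l r f1 f2 (fun k => j (k + 1)) m ∩ Erect l r (j 0))

/-- The topological attractor `Λ`, the union of all the unstable curves. -/
def Attractor (l r : ℕ → ℝ → ℝ) (f1 f2 : ℕ → ℝ × ℝ → ℝ) : Set (ℝ × ℝ) :=
  ⋃ j : ℕ → ℕ, ⋂ m : ℕ, Sfin l r f1 f2 j (m + 1)

/-!
By (D2), both components of the gradient of `log |f_{i1x}|` are bounded by `C₀` on `E_i`, and
(H2) keeps `f_{i1x}` away from zero there. Any point of the full-height rectangle `E_i` is joined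
to the left boundary `x = l_i(y)` by a horizontal segment of length at most `1`, and two points
of that boundary are joined along it by a curve `y ↦ (l_i(y), y)` of height at most `1` with
velocity `(l_i'(y), 1)`, `|l_i'| ≤ α`. So `log |f_{i1x}|` varies by at most `(3 + α) C₀` on
`E_i`, and `c = exp ((3 + α) C₀)` works for every `i`.
-/

section PartialDerivatives

variable {g : ℝ × ℝ → ℝ}

lemma fderiv_apply_eq_add_Dx_Dy {z : ℝ × ℝ} (hg : DifferentiableAt ℝ g z) (v : ℝ × ℝ) :
    fderiv ℝ g z v = v.1 * Dx g z + v.2 * Dy g z := by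
  have hx : HasDerivAt (fun s => g (s, z.2)) (fderiv ℝ g z (1, 0)) z.1 :=
    hg.hasFDerivAt.comp_hasDerivAt z.1 ((hasDerivAt_id z.1).prodMk (hasDerivAt_const z.1 z.2))
  have hy : HasDerivAt (fun s => g (z.1, s)) (fderiv ℝ g z (0, 1)) z.2 :=
    hg.hasFDerivAt.comp_hasDerivAt z.2 ((hasDerivAt_const z.2 z.1).prodMk (hasDerivAt_id z.2))
  have hv : v = v.1 • ((1 : ℝ), (0 : ℝ)) + v.2 • ((0 : ℝ), (1 : ℝ)) := by simp
  rw [Dx, Dy, hx.deriv, hy.deriv, hv, map_add, map_smul, map_smul]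
  simp

lemma DifferentiableAt.hasDerivAt_comp_curve {γ : ℝ → ℝ × ℝ} {v : ℝ × ℝ} {s : ℝ}
    (hg : DifferentiableAt ℝ g (γ s)) (hγ : HasDerivAt γ v s) :
    HasDerivAt (fun s => g (γ s)) (v.1 * Dx g (γ s) + v.2 * Dy g (γ s)) s := by
  rw [← fderiv_apply_eq_add_Dx_Dy hg]
  exact hg.hasFDerivAt.comp_hasDerivAt s hγ

lemma ContDiff.contDiff_Dx {n : WithTop ℕ∞} (hg : ContDiff ℝ (n + 1) g) : ContDiff ℝ n (Dx g) := by
  have hDx : Dx g = fun z => fderiv ℝ g z (1, 0) := by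
    funext z
    simpa using (fderiv_apply_eq_add_Dx_Dy (hg.differentiable (by simp) z) (1, 0)).symm
  rw [hDx]
  exact (hg.fderiv_right le_rfl).clm_apply contDiff_const

end PartialDerivatives

lemma abs_log_abs_sub_le_of_abs_deriv_le {h h' : ℝ → ℝ} {a b C : ℝ}
    (hd : ∀ s ∈ uIcc a b, HasDerivAt h (h' s) s) (hne : ∀ s ∈ uIcc a b, h s ≠ 0)
    (hC : ∀ s ∈ uIcc a b, |h' s| ≤ C * |h s|) :
    |Real.log (|h b|) - Real.log (|h a|)| ≤ C * |b - a| := by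
  have hlog : ∀ s ∈ uIcc a b,
      HasDerivWithinAt (fun s => Real.log (h s)) (h' s / h s) (uIcc a b) s :=
    fun s hs => ((hd s hs).log (hne s hs)).hasDerivWithinAt
  have hbound : ∀ s ∈ uIcc a b, ‖h' s / h s‖ ≤ C := fun s hs => by
    rw [Real.norm_eq_abs, abs_div, div_le_iff₀ (abs_pos.mpr (hne s hs))]
    exact hC s hs
  simpa only [Real.log_abs, Real.norm_eq_abs] using
    (convex_uIcc a b).norm_image_sub_le_of_norm_hasDerivWithin_le hlog hbound
      left_mem_uIcc right_mem_uIcc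

lemma abs_log_abs_Dx_comp_sub_le {g : ℝ × ℝ → ℝ} {S : Set (ℝ × ℝ)} {γ γ' : ℝ → ℝ × ℝ}
    {a b C M : ℝ} (hg : ContDiff ℝ 2 g) (hC : 0 ≤ C) (hne : ∀ z ∈ S, Dx g z ≠ 0)
    (hxx : ∀ z ∈ S, |Dx (Dx g) z| ≤ C * |Dx g z|) (hyx : ∀ z ∈ S, |Dy (Dx g) z| ≤ C * |Dx g z|)
    (hγ : ∀ s ∈ uIcc a b, HasDerivAt γ (γ' s) s) (hγS : ∀ s ∈ uIcc a b, γ s ∈ S)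
    (hγ' : ∀ s ∈ uIcc a b, |(γ' s).1| + |(γ' s).2| ≤ M) :
    |Real.log (|Dx g (γ b)|) - Real.log (|Dx g (γ a)|)| ≤ M * C * |b - a| := by
  have hDx : Differentiable ℝ (Dx g) := (hg.contDiff_Dx (n := 1)).differentiable one_ne_zero
  refine abs_log_abs_sub_le_of_abs_deriv_le (fun s hs => (hDx _).hasDerivAt_comp_curve (hγ s hs))
    (fun s hs => hne _ (hγS s hs)) fun s hs => ?_
  have hS := hγS s hs
  calc |(γ' s).1 * Dx (Dx g) (γ s) + (γ' s).2 * Dy (Dx g) (γ s)|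
      ≤ |(γ' s).1| * (C * |Dx g (γ s)|) + |(γ' s).2| * (C * |Dx g (γ s)|) := by
        refine (abs_add_le _ _).trans ?_
        rw [abs_mul, abs_mul]
        gcongr
        exacts [hxx _ hS, hyx _ hS]
    _ = (|(γ' s).1| + |(γ' s).2|) * (C * |Dx g (γ s)|) := by ring
    _ ≤ M * C * |Dx g (γ s)| := by
        rw [mul_assoc]
        exact mul_le_mul_of_nonneg_right (hγ' s hs) (by positivity)

section FullHeightRectangle

variable {l r : ℕ → ℝ → ℝ} {i : ℕ} {g : ℝ × ℝ → ℝ} {α C : ℝ}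

lemma left_boundary_mem_Erect (hlr : ∀ y ∈ Icc (0 : ℝ) 1, l i y ≤ r i y) {y : ℝ}
    (hy : y ∈ Icc (0 : ℝ) 1) : (l i y, y) ∈ Erect l r i :=
  ⟨hy, le_rfl, hlr y hy⟩

lemma abs_log_abs_Dx_sub_left_boundary_le (hlr : ∀ y ∈ Icc (0 : ℝ) 1, l i y ≤ r i y)
    (hEQ : Erect l r i ⊆ Q2) (hg : ContDiff ℝ 2 g) (hC : 0 ≤ C)
    (hne : ∀ z ∈ Erect l r i, Dx g z ≠ 0)
    (hxx : ∀ z ∈ Erect l r i, |Dx (Dx g) z| ≤ C * |Dx g z|)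
    (hyx : ∀ z ∈ Erect l r i, |Dy (Dx g) z| ≤ C * |Dx g z|) {z : ℝ × ℝ}
    (hz : z ∈ Erect l r i) :
    |Real.log (|Dx g z|) - Real.log (|Dx g (l i z.2, z.2)|)| ≤ C := by
  have hwidth : |z.1 - l i z.2| ≤ 1 :=
    abs_sub_le_of_nonneg_of_le (hEQ hz).1.1 (hEQ hz).1.2
      (hEQ (left_boundary_mem_Erect hlr hz.1)).1.1 (hEQ (left_boundary_mem_Erect hlr hz.1)).1.2
  calc _ ≤ 1 * C * |z.1 - l i z.2| :=
        abs_log_abs_Dx_comp_sub_le (γ := fun s => (s, z.2)) (γ' := fun _ => (1, 0)) hg hC hne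
          hxx hyx (fun s _ => (hasDerivAt_id s).prodMk (hasDerivAt_const s z.2))
          (fun s hs => by
            rw [uIcc_of_le hz.2.1] at hs
            exact ⟨hz.1, hs.1, hs.2.trans hz.2.2⟩)
          (fun _ _ => by simp)
    _ ≤ C := by simpa using mul_le_of_le_one_right hC hwidth

lemma abs_log_abs_Dx_left_boundary_sub_le (hlr : ∀ y ∈ Icc (0 : ℝ) 1, l i y ≤ r i y)
    (hl : Differentiable ℝ (l i)) (hl' : ∀ y, |deriv (l i) y| ≤ α)
    (hg : ContDiff ℝ 2 g) (hC : 0 ≤ C)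
    (hne : ∀ z ∈ Erect l r i, Dx g z ≠ 0)
    (hxx : ∀ z ∈ Erect l r i, |Dx (Dx g) z| ≤ C * |Dx g z|)
    (hyx : ∀ z ∈ Erect l r i, |Dy (Dx g) z| ≤ C * |Dx g z|) {y₁ y₂ : ℝ} (hy₁ : y₁ ∈ Icc (0 : ℝ) 1)
    (hy₂ : y₂ ∈ Icc (0 : ℝ) 1) :
    |Real.log (|Dx g (l i y₁, y₁)|) - Real.log (|Dx g (l i y₂, y₂)|)| ≤ (α + 1) * C := by
  calc _ ≤ (α + 1) * C * |y₁ - y₂| :=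
        abs_log_abs_Dx_comp_sub_le (γ := fun s => (l i s, s))
          (γ' := fun s => (deriv (l i) s, 1)) hg hC hne hxx hyx
          (fun s _ => (hl s).hasDerivAt.prodMk (hasDerivAt_id s))
          (fun s hs => left_boundary_mem_Erect hlr (uIcc_subset_Icc hy₂ hy₁ hs))
          (fun s _ => by simpa using hl' s)
    _ ≤ (α + 1) * C := by
        have hα : 0 ≤ α := (abs_nonneg _).trans (hl' 0)
        exact mul_le_of_le_one_right (by positivity)
          (abs_sub_le_of_nonneg_of_le hy₁.1 hy₁.2 hy₂.1 hy₂.2)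

lemma log_abs_Dx_le_add_of_mem_Erect (hlr : ∀ y ∈ Icc (0 : ℝ) 1, l i y ≤ r i y)
    (hEQ : Erect l r i ⊆ Q2) (hl : Differentiable ℝ (l i)) (hl' : ∀ y, |deriv (l i) y| ≤ α)
    (hg : ContDiff ℝ 2 g) (hC : 0 ≤ C)
    (hne : ∀ z ∈ Erect l r i, Dx g z ≠ 0)
    (hxx : ∀ z ∈ Erect l r i, |Dx (Dx g) z| ≤ C * |Dx g z|)
    (hyx : ∀ z ∈ Erect l r i, |Dy (Dx g) z| ≤ C * |Dx g z|) {z₁ z₂ : ℝ × ℝ} (hz₁ : z₁ ∈ Erect l r i)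
    (hz₂ : z₂ ∈ Erect l r i) :
    Real.log (|Dx g z₁|) ≤ Real.log (|Dx g z₂|) + (α + 3) * C := by
  have h₁ := abs_le.mp (abs_log_abs_Dx_sub_left_boundary_le hlr hEQ hg hC hne hxx hyx hz₁)
  have h₂ := abs_le.mp (abs_log_abs_Dx_sub_left_boundary_le hlr hEQ hg hC hne hxx hyx hz₂)
  have h₁₂ := abs_le.mp (abs_log_abs_Dx_left_boundary_sub_le hlr hl hl' hg hC hne hxx hyx
    hz₁.1 hz₂.1)
  linarith [h₁.2, h₂.1, h₁₂.2]

end FullHeightRectangle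

theorem bounded_distortion_f1x_general
    (α K₀ : ℝ) (hα0 : 0 < α) (hK : 1 < K₀)
    (l r : ℕ → ℝ → ℝ) (f1 f2 : ℕ → ℝ × ℝ → ℝ)
    (hl : ∀ i, ContDiff ℝ 1 (l i))
    (hl' : ∀ i y, |deriv (l i) y| ≤ α)
    (hlr : ∀ i, ∀ y ∈ Set.Icc (0:ℝ) 1, l i y < r i y)
    (hEQ : ∀ i, Erect l r i ⊆ Q2)
    (hfsm : ∀ i, ContDiff ℝ 2 (fv f1 f2 i))
    (hH2 : ∀ i, ∀ z ∈ Erect l r i, K₀ ≤ |Dx (f1 i) z| - α * |Dy (f1 i) z|)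
    (C₀ : ℝ) (hC₀ : 0 < C₀)
    (hD2 : ∀ i, ∀ z ∈ Erect l r i, D2max f1 f2 i z ≤ C₀ * |Dx (f1 i) z|)
    :
    ∃ c : ℝ, 0 < c ∧ ∀ i : ℕ, ∀ z₁ ∈ Erect l r i, ∀ z₂ ∈ Erect l r i,
      |Dx (f1 i) z₁| ≤ c * |Dx (f1 i) z₂| := by
  refine ⟨Real.exp ((α + 3) * C₀), Real.exp_pos _, fun i z₁ hz₁ z₂ hz₂ => ?_⟩
  have hDx_pos : ∀ z ∈ Erect l r i, 0 < |Dx (f1 i) z| := fun z hz => by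
    linarith [hH2 i z hz, mul_nonneg hα0.le (abs_nonneg (Dy (f1 i) z))]
  have hD2' : ∀ z ∈ Erect l r i,
      |Dx (Dx (f1 i)) z| ≤ C₀ * |Dx (f1 i) z| ∧ |Dy (Dx (f1 i)) z| ≤ C₀ * |Dx (f1 i) z| :=
    fun z hz => by
      have h := hD2 i z hz
      simp only [D2max, max_le_iff] at h
      exact h.1.1
  have hlog := log_abs_Dx_le_add_of_mem_Erect (fun y hy => (hlr i y hy).le) (hEQ i)
    ((hl i).differentiable one_ne_zero) (hl' i) (contDiff_fst.comp (hfsm i)) hC₀.le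
    (fun z hz => abs_pos.mp (hDx_pos z hz)) (fun z hz => (hD2' z hz).1)
    (fun z hz => (hD2' z hz).2) hz₁ hz₂
  calc |Dx (f1 i) z₁| = Real.exp (Real.log |Dx (f1 i) z₁|) :=
        (Real.exp_log (hDx_pos z₁ hz₁)).symm
    _ ≤ Real.exp (Real.log |Dx (f1 i) z₂| + (α + 3) * C₀) := Real.exp_le_exp.mpr hlog
    _ = Real.exp ((α + 3) * C₀) * |Dx (f1 i) z₂| := by
        rw [Real.exp_add, Real.exp_log (hDx_pos z₂ hz₂), mul_comm]

/-- Corollary 5.3: under H1–H5 and D2, the partial derivative `f_{i1x}` has uniformly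
bounded ratios on each `E_i`, with a constant independent of `i`. -/
theorem bounded_distortion_f1x
    (α K₀ : ℝ) (hα0 : 0 < α) (hα1 : α < 1) (hK : 1 < K₀)
    (l r b t : ℕ → ℝ → ℝ) (f1 f2 : ℕ → ℝ × ℝ → ℝ)
    (hl : ∀ i, ContDiff ℝ 1 (l i)) (hr : ∀ i, ContDiff ℝ 1 (r i))
    (hb : ∀ i, ContDiff ℝ 1 (b i)) (ht : ∀ i, ContDiff ℝ 1 (t i))
    (hl' : ∀ i y, |deriv (l i) y| ≤ α) (hr' : ∀ i y, |deriv (r i) y| ≤ α)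
    (hb' : ∀ i x, |deriv (b i) x| ≤ α) (ht' : ∀ i x, |deriv (t i) x| ≤ α)
    (hlr : ∀ i, ∀ y ∈ Set.Icc (0:ℝ) 1, l i y < r i y)
    (hbt : ∀ i, ∀ x ∈ Set.Icc (0:ℝ) 1, b i x < t i x)
    (hEQ : ∀ i, Erect l r i ⊆ Q2) (hSQ : ∀ i, Sstrip b t i ⊆ Q2)
    (hfsm : ∀ i, ContDiff ℝ 2 (fv f1 f2 i))
    (hfinj : ∀ i, Set.InjOn (fv f1 f2 i) (Erect l r i))
    (hfim : ∀ i, fv f1 f2 i '' Erect l r i = Sstrip b t i)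
    (hJpos : ∀ i, ∀ z ∈ Erect l r i, 0 < Jac f1 f2 i z)
    (hG1E : ∀ i j, i ≠ j → interior (Erect l r i) ∩ interior (Erect l r j) = ∅)
    (hG1S : ∀ i j, i ≠ j → interior (Sstrip b t i) ∩ interior (Sstrip b t j) = ∅)
    (hG2 : volume (Q2 \ ⋃ i, interior (Erect l r i)) = 0)
    (hG3 : Summable (fun i => deltaMax l r i * Real.log (1 / deltaMin l r i)))
    (hH1 : ∀ i, ∀ z ∈ Erect l r i,
      |Dx (f2 i) z| + α * |Dy (f2 i) z| + α ^ 2 * |Dy (f1 i) z| ≤ α * |Dx (f1 i) z|)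
    (hH2 : ∀ i, ∀ z ∈ Erect l r i, K₀ ≤ |Dx (f1 i) z| - α * |Dy (f1 i) z|)
    (hH3 : ∀ i, ∀ z ∈ Erect l r i,
      |Dy (f1 i) z| + α * |Dy (f2 i) z| + α ^ 2 * |Dx (f2 i) z| ≤ α * |Dx (f1 i) z|)
    (hH4 : ∀ i, ∀ z ∈ Erect l r i, Jac f1 f2 i z * K₀ ≤ |Dx (f1 i) z| - α * |Dx (f2 i) z|)
    (hH5 : 1 / K₀ ^ 2 + α ^ 2 < 1)
    (C₀ : ℝ) (hC₀ : 0 < C₀)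
    (hD2 : ∀ i, ∀ z ∈ Erect l r i, D2max f1 f2 i z ≤ C₀ * |Dx (f1 i) z|)
    :
    ∃ c : ℝ, 0 < c ∧ ∀ i : ℕ, ∀ z₁ ∈ Erect l r i, ∀ z₂ ∈ Erect l r i,
      |Dx (f1 i) z₁| ≤ c * |Dx (f1 i) z₂| :=
  bounded_distortion_f1x_general α K₀ hα0 hK l r f1 f2 hl hl' hlr hEQ hfsm hH2 C₀ hC₀ hD2
end
end

section
/- Assume the SETUP with the f_i of class C², conditions G1–G3, H1–H5, and the distortion condition D2, and use the SYMBOLIC CODING. Then there exists a constant C > 0 such that for every index i and all bi-infinite index sequences ω, ω' with ω₀ = ω'₀ = i (so that z(ω), z(ω') ∈ E_i ∩ Λ), one has |log D^uF(z(ω)) − log D^uF(z(ω'))| ≤ C; equivalently, the variation of log D^uF over E_i ∩ Λ is bounded uniformly in i, and the ratios D^uf_i(z₁)/D^uf_i(z₂) are bounded by a constant c independent of i. -/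
open MeasureTheory Set Filter Topology

noncomputable section

/-- The slope `a_z` of the unstable direction at the point `z(ω)` coded by `ω`,
where `yu ω` is the unstable curve of `ω` and `zp ω` is the point coded by `ω`. -/
def uSlope (yu : (ℤ → ℕ) → ℝ → ℝ) (zp : (ℤ → ℕ) → ℝ × ℝ) (ω : ℤ → ℕ) : ℝ :=
  derivWithin (yu ω) (Set.Icc (0:ℝ) 1) (zp ω).1

/-- The derivative of `F` in the unstable direction at the point `z(ω)`:
`D^uF(z(ω)) = |F_{1x}(z(ω)) + a_{z(ω)} F_{1y}(z(ω))|` with `F = f_{ω₀}`. -/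
def DuF (f1 : ℕ → ℝ × ℝ → ℝ) (yu : (ℤ → ℕ) → ℝ → ℝ) (zp : (ℤ → ℕ) → ℝ × ℝ)
    (ω : ℤ → ℕ) : ℝ :=
  |Dx (f1 (ω 0)) (zp ω) + uSlope yu zp ω * Dy (f1 (ω 0)) (zp ω)|

/-! Condition D2 bounds the gradient of `F_{1x}` by `2 C₀ |F_{1x}|` on `E_i`, so `log |F_{1x}|`
has gradient at most `2 C₀` there. Pulling back along the parametrisation
`(θ, y) ↦ (l y + θ (r y - l y), y)` of `E_i` by the unit square, whose derivative has norm at most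
`1 + α`, the mean value inequality on the square shows that `log |F_{1x}|` varies by at most
`2 C₀ (1 + α)` on `E_i`. By H2 and H3, `|a F_{1y}| ≤ α² |F_{1x}|` for every slope `|a| ≤ α`, so
`D^uF = |F_{1x} + a F_{1y}|` differs from `|F_{1x}|` by a factor in `[1 - α², 1 + α²]`. -/

lemma Dx_eq_fderiv {g : ℝ × ℝ → ℝ} {z : ℝ × ℝ} (hg : DifferentiableAt ℝ g z) :
    Dx g z = fderiv ℝ g z (1, 0) :=
  (hg.hasFDerivAt.comp_hasDerivAt z.1
    ((hasDerivAt_id z.1).prodMk (hasDerivAt_const z.1 z.2))).deriv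

lemma Dy_eq_fderiv {g : ℝ × ℝ → ℝ} {z : ℝ × ℝ} (hg : DifferentiableAt ℝ g z) :
    Dy g z = fderiv ℝ g z (0, 1) :=
  (hg.hasFDerivAt.comp_hasDerivAt z.2
    ((hasDerivAt_const z.2 z.1).prodMk (hasDerivAt_id z.2))).deriv

lemma ContinuousLinearMap.norm_le_abs_apply_add_abs_apply (L : ℝ × ℝ →L[ℝ] ℝ) :
    ‖L‖ ≤ |L (1, 0)| + |L (0, 1)| := by
  refine L.opNorm_le_bound (by positivity) fun v => ?_
  have hLv : L v = v.1 * L (1, 0) + v.2 * L (0, 1) := by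
    conv_lhs => rw [show v = v.1 • ((1 : ℝ), (0 : ℝ)) + v.2 • ((0 : ℝ), (1 : ℝ)) by simp]
    rw [map_add, map_smul, map_smul, smul_eq_mul, smul_eq_mul]
  have h1 : |v.1| ≤ ‖v‖ := le_sup_left
  have h2 : |v.2| ≤ ‖v‖ := le_sup_right
  rw [hLv, Real.norm_eq_abs]
  calc |v.1 * L (1, 0) + v.2 * L (0, 1)| ≤ |v.1| * |L (1, 0)| + |v.2| * |L (0, 1)| := by
        rw [← abs_mul, ← abs_mul]; exact abs_add_le _ _
    _ ≤ (|L (1, 0)| + |L (0, 1)|) * ‖v‖ := by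
        nlinarith [abs_nonneg (L (1, 0)), abs_nonneg (L (0, 1))]

lemma norm_fderiv_le_abs_Dx_add_abs_Dy {g : ℝ × ℝ → ℝ} {z : ℝ × ℝ}
    (hg : DifferentiableAt ℝ g z) : ‖fderiv ℝ g z‖ ≤ |Dx g z| + |Dy g z| := by
  rw [Dx_eq_fderiv hg, Dy_eq_fderiv hg]
  exact (fderiv ℝ g z).norm_le_abs_apply_add_abs_apply

lemma Convex.abs_log_abs_sub_log_abs_le {E : Type*} [NormedAddCommGroup E] [NormedSpace ℝ E]
    {g : E → ℝ} {g' : E → E →L[ℝ] ℝ} {s : Set E} {C : ℝ} (hs : Convex ℝ s)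
    (hg : ∀ x ∈ s, HasFDerivWithinAt g (g' x) s x) (hne : ∀ x ∈ s, g x ≠ 0)
    (hbd : ∀ x ∈ s, ‖g' x‖ ≤ C * |g x|) {x y : E} (hx : x ∈ s) (hy : y ∈ s) :
    |Real.log (|g x|) - Real.log (|g y|)| ≤ C * ‖x - y‖ := by
  simp only [Real.log_abs]
  refine hs.norm_image_sub_le_of_norm_hasFDerivWithin_le
    (fun z hz => (hg z hz).log (hne z hz)) (fun z hz => ?_) hy hx
  rw [norm_smul, norm_inv, Real.norm_eq_abs, inv_mul_le_iff₀ (abs_pos.2 (hne z hz)), mul_comm]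
  exact hbd z hz

/-- Parametrises `Erect l r i` by the convex square `Q2`, so that the mean value inequality
applies although `Erect l r i` itself need not be convex. -/
def rectParam (l r : ℝ → ℝ) (p : ℝ × ℝ) : ℝ × ℝ := (l p.2 + p.1 * (r p.2 - l p.2), p.2)

lemma rectParam_mem_Erect {l r : ℕ → ℝ → ℝ} {i : ℕ}
    (hlr : ∀ y ∈ Icc (0:ℝ) 1, l i y ≤ r i y) {p : ℝ × ℝ} (hp : p ∈ Q2) :
    rectParam (l i) (r i) p ∈ Erect l r i := by
  obtain ⟨⟨h0, h1⟩, hy⟩ := hp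
  have hw := sub_nonneg.2 (hlr p.2 hy)
  exact ⟨hy, by simp only [rectParam]; nlinarith, by simp only [rectParam]; nlinarith⟩

lemma exists_rectParam_eq {l r : ℕ → ℝ → ℝ} {i : ℕ}
    (hlr : ∀ y ∈ Icc (0:ℝ) 1, l i y < r i y) {z : ℝ × ℝ} (hz : z ∈ Erect l r i) :
    ∃ p ∈ Q2, rectParam (l i) (r i) p = z := by
  obtain ⟨hy, hl, hr⟩ := hz
  have hw := sub_pos.2 (hlr z.2 hy)
  refine ⟨((z.1 - l i z.2) / (r i z.2 - l i z.2), z.2),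
    ⟨⟨div_nonneg (by linarith) hw.le, (div_le_one hw).2 (by linarith)⟩, hy⟩, ?_⟩
  simp only [rectParam, div_mul_cancel₀ _ hw.ne', add_sub_cancel]

lemma hasFDerivAt_rectParam {l r : ℝ → ℝ} {p : ℝ × ℝ}
    (hl : DifferentiableAt ℝ l p.2) (hr : DifferentiableAt ℝ r p.2) :
    HasFDerivAt (rectParam l r)
      (((r p.2 - l p.2) • ContinuousLinearMap.fst ℝ ℝ ℝ +
          (deriv l p.2 + p.1 * (deriv r p.2 - deriv l p.2)) • ContinuousLinearMap.snd ℝ ℝ ℝ).prod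
        (ContinuousLinearMap.snd ℝ ℝ ℝ)) p := by
  have hl' := hl.hasDerivAt.comp_hasFDerivAt p (hasFDerivAt_snd (𝕜 := ℝ) (p := p))
  have hr' := hr.hasDerivAt.comp_hasFDerivAt p (hasFDerivAt_snd (𝕜 := ℝ) (p := p))
  refine ((hl'.add ((hasFDerivAt_fst (𝕜 := ℝ) (p := p)).mul (hr'.sub hl'))).prodMk
    (hasFDerivAt_snd (𝕜 := ℝ) (p := p))).congr_fderiv ?_
  ext <;> simp

lemma norm_fderiv_rectParam_le {l r : ℝ → ℝ} {α : ℝ} {p : ℝ × ℝ}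
    (hl : DifferentiableAt ℝ l p.2) (hr : DifferentiableAt ℝ r p.2)
    (hl' : |deriv l p.2| ≤ α) (hr' : |deriv r p.2| ≤ α)
    (hw0 : 0 ≤ r p.2 - l p.2) (hw1 : r p.2 - l p.2 ≤ 1) (hp : p.1 ∈ Icc (0:ℝ) 1) :
    ‖fderiv ℝ (rectParam l r) p‖ ≤ 1 + α := by
  rw [(hasFDerivAt_rectParam hl hr).fderiv]
  have hα : 0 ≤ α := (abs_nonneg _).trans hl'
  have hslope : |deriv l p.2 + p.1 * (deriv r p.2 - deriv l p.2)| ≤ α := by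
    rw [show deriv l p.2 + p.1 * (deriv r p.2 - deriv l p.2)
      = (1 - p.1) * deriv l p.2 + p.1 * deriv r p.2 by ring]
    refine (abs_add_le _ _).trans ?_
    rw [abs_mul, abs_mul, abs_of_nonneg (sub_nonneg.2 hp.2), abs_of_nonneg hp.1]
    nlinarith [hp.1, hp.2]
  refine ContinuousLinearMap.opNorm_le_bound _ (by linarith) fun v => ?_
  have h1 : |v.1| ≤ ‖v‖ := le_sup_left
  have h2 : |v.2| ≤ ‖v‖ := le_sup_right
  simp only [ContinuousLinearMap.prod_apply, add_apply,
    smul_apply, ContinuousLinearMap.coe_fst', ContinuousLinearMap.coe_snd',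
    smul_eq_mul, Prod.norm_mk, Real.norm_eq_abs]
  refine max_le ?_ (by nlinarith [norm_nonneg v])
  refine (abs_add_le _ _).trans ?_
  rw [abs_mul, abs_mul, abs_of_nonneg hw0]
  nlinarith [abs_nonneg v.1, abs_nonneg v.2,
    abs_nonneg (deriv l p.2 + p.1 * (deriv r p.2 - deriv l p.2))]

lemma ContDiff.differentiable_Dx {f : ℝ × ℝ → ℝ} (hf : ContDiff ℝ 2 f) :
    Differentiable ℝ (Dx f) := by
  have hDx : Dx f = fun z => fderiv ℝ f z (1, 0) :=
    funext fun z => Dx_eq_fderiv ((hf.differentiable (by norm_num)) z)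
  rw [hDx]
  exact ((hf.fderiv_right (m := 1) (by norm_num)).clm_apply contDiff_const).differentiable
    one_ne_zero

lemma sub_mem_Icc_of_Erect_subset_Q2 {l r : ℕ → ℝ → ℝ} {i : ℕ}
    (hlr : ∀ y ∈ Icc (0:ℝ) 1, l i y ≤ r i y) (hEQ : Erect l r i ⊆ Q2) {y : ℝ}
    (hy : y ∈ Icc (0:ℝ) 1) : r i y - l i y ∈ Icc (0:ℝ) 1 := by
  have hl := (hEQ (show (l i y, y) ∈ Erect l r i from ⟨hy, le_rfl, hlr y hy⟩)).1
  have hr := (hEQ (show (r i y, y) ∈ Erect l r i from ⟨hy, hlr y hy, le_rfl⟩)).1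
  exact ⟨sub_nonneg.2 (hlr y hy), by linarith [hl.1, hr.2]⟩

lemma norm_sub_le_one_of_mem_Q2 {p q : ℝ × ℝ} (hp : p ∈ Q2) (hq : q ∈ Q2) : ‖p - q‖ ≤ 1 := by
  obtain ⟨⟨hp1, hp1'⟩, hp2, hp2'⟩ := hp
  obtain ⟨⟨hq1, hq1'⟩, hq2, hq2'⟩ := hq
  refine max_le ?_ ?_ <;> rw [Real.norm_eq_abs, abs_le] <;> constructor <;>
    simp only [Prod.fst_sub, Prod.snd_sub] <;> linarith

lemma abs_log_abs_Dx_sub_le_of_mem_Erect {α C₀ : ℝ} (hC₀ : 0 ≤ C₀)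
    {l r : ℕ → ℝ → ℝ} {i : ℕ} (hl : Differentiable ℝ (l i)) (hr : Differentiable ℝ (r i))
    (hl' : ∀ y, |deriv (l i) y| ≤ α) (hr' : ∀ y, |deriv (r i) y| ≤ α)
    (hlr : ∀ y ∈ Icc (0:ℝ) 1, l i y < r i y) (hEQ : Erect l r i ⊆ Q2)
    {f : ℝ × ℝ → ℝ} (hf : ContDiff ℝ 2 f) (hne : ∀ z ∈ Erect l r i, Dx f z ≠ 0)
    (hxx : ∀ z ∈ Erect l r i, |Dx (Dx f) z| ≤ C₀ * |Dx f z|)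
    (hyx : ∀ z ∈ Erect l r i, |Dy (Dx f) z| ≤ C₀ * |Dx f z|)
    {z₁ z₂ : ℝ × ℝ} (hz₁ : z₁ ∈ Erect l r i) (hz₂ : z₂ ∈ Erect l r i) :
    |Real.log (|Dx f z₁|) - Real.log (|Dx f z₂|)| ≤ 2 * C₀ * (1 + α) := by
  set Φ := rectParam (l i) (r i)
  have hα : 0 ≤ α := (abs_nonneg _).trans (hl' 0)
  have hΦE : ∀ p ∈ Q2, Φ p ∈ Erect l r i := fun p hp =>
    rectParam_mem_Erect (fun y hy => (hlr y hy).le) hp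
  have hDxf := hf.differentiable_Dx
  have hDΦ : ∀ p ∈ Q2, ‖fderiv ℝ Φ p‖ ≤ 1 + α := fun p hp =>
    have hw := sub_mem_Icc_of_Erect_subset_Q2 (fun y hy => (hlr y hy).le) hEQ hp.2
    norm_fderiv_rectParam_le (hl _) (hr _) (hl' _) (hr' _) hw.1 hw.2 hp.1
  have hDDxf : ∀ z ∈ Erect l r i, ‖fderiv ℝ (Dx f) z‖ ≤ 2 * C₀ * |Dx f z| := fun z hz =>
    (norm_fderiv_le_abs_Dx_add_abs_Dy (hDxf z)).trans (by linarith [hxx z hz, hyx z hz])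
  obtain ⟨p₁, hp₁, rfl⟩ := exists_rectParam_eq hlr hz₁
  obtain ⟨p₂, hp₂, rfl⟩ := exists_rectParam_eq hlr hz₂
  calc |Real.log (|Dx f (Φ p₁)|) - Real.log (|Dx f (Φ p₂)|)|
      ≤ 2 * C₀ * (1 + α) * ‖p₁ - p₂‖ := by
        refine Convex.abs_log_abs_sub_log_abs_le (g := Dx f ∘ Φ)
          (g' := fun p => (fderiv ℝ (Dx f) (Φ p)).comp (fderiv ℝ Φ p))
          ((convex_Icc 0 1).prod (convex_Icc 0 1)) (fun p _ => ?_)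
          (fun p hp => hne _ (hΦE p hp)) (fun p hp => ?_) hp₁ hp₂
        · exact ((hDxf _).hasFDerivAt.comp p
            (hasFDerivAt_rectParam (hl _) (hr _)).differentiableAt.hasFDerivAt).hasFDerivWithinAt
        · calc _ ≤ ‖fderiv ℝ (Dx f) (Φ p)‖ * ‖fderiv ℝ Φ p‖ :=
                ContinuousLinearMap.opNorm_comp_le _ _
            _ ≤ 2 * C₀ * |Dx f (Φ p)| * (1 + α) :=
                mul_le_mul (hDDxf _ (hΦE p hp)) (hDΦ p hp) (norm_nonneg _) (by positivity)
            _ = 2 * C₀ * (1 + α) * |(Dx f ∘ Φ) p| := by simp only [Function.comp_apply]; ring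
    _ ≤ 2 * C₀ * (1 + α) :=
        mul_le_of_le_one_right (by positivity) (norm_sub_le_one_of_mem_Q2 hp₁ hp₂)

lemma one_sub_mul_abs_le_abs_add {A e ε : ℝ} (he : |e| ≤ ε * |A|) :
    (1 - ε) * |A| ≤ |A + e| := by
  have := abs_sub_abs_le_abs_sub A (-e)
  rw [abs_neg, sub_neg_eq_add] at this
  linarith

lemma abs_log_abs_add_sub_log_abs_le {A e ε : ℝ} (hA : A ≠ 0) (hε : ε < 1)
    (he : |e| ≤ ε * |A|) : |Real.log (|A + e|) - Real.log (|A|)| ≤ -Real.log (1 - ε) := by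
  have hA' : 0 < |A| := abs_pos.2 hA
  have hlow : (1 - ε) * |A| ≤ |A + e| := one_sub_mul_abs_le_abs_add he
  have hupp : |A + e| ≤ (1 + ε) * |A| := by linarith [abs_add_le A e]
  have hpos : 0 < |A + e| := lt_of_lt_of_le (by nlinarith) hlow
  rw [← Real.log_div hpos.ne' hA'.ne']
  have hq_low : 1 - ε ≤ |A + e| / |A| := (le_div_iff₀ hA').2 hlow
  have hq_upp : |A + e| / |A| ≤ 1 + ε := (div_le_iff₀ hA').2 hupp
  have hlog_one_sub : Real.log (1 - ε) ≤ -ε := by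
    linarith [Real.log_le_sub_one_of_pos (sub_pos.2 hε)]
  rw [abs_le]
  constructor
  · linarith [Real.log_le_log (sub_pos.2 hε) hq_low]
  · linarith [Real.log_le_sub_one_of_pos (div_pos hpos hA')]

lemma zp_mem_Erect {l r : ℕ → ℝ → ℝ} {f1 f2 : ℕ → ℝ × ℝ → ℝ} {zp : (ℤ → ℕ) → ℝ × ℝ}
    (hzp : ∀ ω : ℤ → ℕ,
      (⋂ m : ℕ, ⋂ n : ℕ,
        Sfin l r f1 f2 (fun k => ω (-(k : ℤ) - 1)) (m + 1) ∩
          Efin l r f1 f2 (fun k => ω (k : ℤ)) (n + 1)) = {zp ω})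
    (ω : ℤ → ℕ) : zp ω ∈ Erect l r (ω 0) := by
  have h := (hzp ω).symm ▸ Set.mem_singleton (zp ω)
  exact (mem_iInter.1 (mem_iInter.1 h 0) 0).2.1

lemma abs_log_DuF_sub_log_abs_Dx_le {α K₀ : ℝ} (hα0 : 0 < α) (hα1 : α < 1) (hK : 0 < K₀)
    {f1 : ℕ → ℝ × ℝ → ℝ} {yu : (ℤ → ℕ) → ℝ → ℝ} {zp : (ℤ → ℕ) → ℝ × ℝ} {ω : ℤ → ℕ}
    (hslope : |uSlope yu zp ω| ≤ α)
    (hH2 : K₀ ≤ |Dx (f1 (ω 0)) (zp ω)| - α * |Dy (f1 (ω 0)) (zp ω)|)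
    (hH3 : |Dy (f1 (ω 0)) (zp ω)| ≤ α * |Dx (f1 (ω 0)) (zp ω)|) :
    0 < DuF f1 yu zp ω ∧
      |Real.log (DuF f1 yu zp ω) - Real.log (|Dx (f1 (ω 0)) (zp ω)|)| ≤ -Real.log (1 - α ^ 2) := by
  set A := Dx (f1 (ω 0)) (zp ω)
  set B := Dy (f1 (ω 0)) (zp ω)
  have hA : 0 < |A| := by nlinarith [abs_nonneg B]
  have he : |uSlope yu zp ω * B| ≤ α ^ 2 * |A| := by
    rw [abs_mul, sq, mul_assoc]
    exact mul_le_mul hslope hH3 (abs_nonneg _) hα0.le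
  have hα2 : α ^ 2 < 1 := by nlinarith
  refine ⟨lt_of_lt_of_le (by nlinarith) (one_sub_mul_abs_le_abs_add he), ?_⟩
  exact abs_log_abs_add_sub_log_abs_le (abs_pos.1 hA) hα2 he

lemma le_exp_mul_of_log_sub_log_le {x y V : ℝ} (hx : 0 < x) (hy : 0 < y)
    (h : Real.log x - Real.log y ≤ V) : x ≤ Real.exp V * y := by
  rw [← Real.exp_log hy, ← Real.exp_add, ← Real.log_le_iff_le_exp hx]
  linarith

theorem logDuF_bounded_variation_on_Ei_general
    (α K₀ : ℝ) (hα0 : 0 < α) (hα1 : α < 1) (hK : 1 < K₀)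
    (l r : ℕ → ℝ → ℝ) (f1 f2 : ℕ → ℝ × ℝ → ℝ)
    (hl : ∀ i, ContDiff ℝ 1 (l i)) (hr : ∀ i, ContDiff ℝ 1 (r i))
    (hl' : ∀ i y, |deriv (l i) y| ≤ α) (hr' : ∀ i y, |deriv (r i) y| ≤ α)
    (hlr : ∀ i, ∀ y ∈ Set.Icc (0:ℝ) 1, l i y < r i y)
    (hEQ : ∀ i, Erect l r i ⊆ Q2)
    (hfsm : ∀ i, ContDiff ℝ 2 (fv f1 f2 i))
    (hH2 : ∀ i, ∀ z ∈ Erect l r i, K₀ ≤ |Dx (f1 i) z| - α * |Dy (f1 i) z|)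
    (hH3 : ∀ i, ∀ z ∈ Erect l r i,
      |Dy (f1 i) z| + α * |Dy (f2 i) z| + α ^ 2 * |Dx (f2 i) z| ≤ α * |Dx (f1 i) z|)
    (C₀ : ℝ) (hC₀ : 0 < C₀)
    (hD2 : ∀ i, ∀ z ∈ Erect l r i, D2max f1 f2 i z ≤ C₀ * |Dx (f1 i) z|)
    (yu : (ℤ → ℕ) → ℝ → ℝ) (zp : (ℤ → ℕ) → ℝ × ℝ)
    (hyu2 : ∀ ω : ℤ → ℕ, ∀ x ∈ Set.Icc (0:ℝ) 1,
      |derivWithin (yu ω) (Set.Icc (0:ℝ) 1) x| ≤ α)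
    (hzp : ∀ ω : ℤ → ℕ,
      (⋂ m : ℕ, ⋂ n : ℕ,
        Sfin l r f1 f2 (fun k => ω (-(k : ℤ) - 1)) (m + 1) ∩
          Efin l r f1 f2 (fun k => ω (k : ℤ)) (n + 1)) = {zp ω})
    :
    ∃ C : ℝ, 0 < C ∧
      ∀ ω ω' : ℤ → ℕ, ω 0 = ω' 0 →
        |Real.log (DuF f1 yu zp ω) - Real.log (DuF f1 yu zp ω')| ≤ C ∧
        DuF f1 yu zp ω ≤ C * DuF f1 yu zp ω' := by
  have hDuF (ω : ℤ → ℕ) := by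
    have hz := zp_mem_Erect hzp ω
    refine abs_log_DuF_sub_log_abs_Dx_le hα0 hα1 (by linarith) (hyu2 ω _ (hEQ _ hz).1)
      (hH2 _ _ hz) ?_
    linarith [hH3 _ _ hz, mul_nonneg hα0.le (abs_nonneg (Dy (f2 (ω 0)) (zp ω))),
      mul_nonneg (sq_nonneg α) (abs_nonneg (Dx (f2 (ω 0)) (zp ω)))]
  have hDx (i : ℕ) {z₁ z₂ : ℝ × ℝ} (hz₁ : z₁ ∈ Erect l r i) (hz₂ : z₂ ∈ Erect l r i) :=
    abs_log_abs_Dx_sub_le_of_mem_Erect (f := f1 i) hC₀.le ((hl i).differentiable one_ne_zero)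
      ((hr i).differentiable one_ne_zero) (hl' i) (hr' i) (hlr i) (hEQ i) (hfsm i).fst
      (fun z hz => abs_pos.1
        (by linarith [hH2 i z hz, mul_nonneg hα0.le (abs_nonneg (Dy (f1 i) z))]))
      (fun z hz => (le_max_of_le_left (le_max_of_le_left (le_max_left _ _))).trans (hD2 i z hz))
      (fun z hz => (le_max_of_le_left (le_max_of_le_left (le_max_right _ _))).trans (hD2 i z hz))
      hz₁ hz₂
  set V := 2 * -Real.log (1 - α ^ 2) + 2 * C₀ * (1 + α)
  have hvar : ∀ ω ω' : ℤ → ℕ, ω 0 = ω' 0 →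
      |Real.log (DuF f1 yu zp ω) - Real.log (DuF f1 yu zp ω')| ≤ V := by
    intro ω ω' h
    have h₁ := abs_le.1 (hDuF ω).2
    have h₂ := abs_le.1 (hDuF ω').2
    have h₃ := abs_le.1 (hDx (ω 0) (zp_mem_Erect hzp ω) (h ▸ zp_mem_Erect hzp ω'))
    rw [← h] at h₂
    rw [abs_le]
    constructor <;> linarith
  refine ⟨Real.exp V, Real.exp_pos V, fun ω ω' h => ⟨?_, ?_⟩⟩
  · linarith [hvar ω ω' h, Real.add_one_le_exp V]
  · exact le_exp_mul_of_log_sub_log_le (hDuF ω).1 (hDuF ω').1 (le_of_abs_le (hvar ω ω' h))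

/-- Corollaries 5.6 and 5.7: the variation of `log D^uF` over each `E_i ∩ Λ` is bounded
uniformly in `i`, and the ratios `D^u f_i(z₁)/D^u f_i(z₂)` are uniformly bounded. -/
theorem logDuF_bounded_variation_on_Ei
    (α K₀ : ℝ) (hα0 : 0 < α) (hα1 : α < 1) (hK : 1 < K₀)
    (l r b t : ℕ → ℝ → ℝ) (f1 f2 : ℕ → ℝ × ℝ → ℝ)
    (hl : ∀ i, ContDiff ℝ 1 (l i)) (hr : ∀ i, ContDiff ℝ 1 (r i))
    (hb : ∀ i, ContDiff ℝ 1 (b i)) (ht : ∀ i, ContDiff ℝ 1 (t i))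
    (hl' : ∀ i y, |deriv (l i) y| ≤ α) (hr' : ∀ i y, |deriv (r i) y| ≤ α)
    (hb' : ∀ i x, |deriv (b i) x| ≤ α) (ht' : ∀ i x, |deriv (t i) x| ≤ α)
    (hlr : ∀ i, ∀ y ∈ Set.Icc (0:ℝ) 1, l i y < r i y)
    (hbt : ∀ i, ∀ x ∈ Set.Icc (0:ℝ) 1, b i x < t i x)
    (hEQ : ∀ i, Erect l r i ⊆ Q2) (hSQ : ∀ i, Sstrip b t i ⊆ Q2)
    (hfsm : ∀ i, ContDiff ℝ 2 (fv f1 f2 i))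
    (hfinj : ∀ i, Set.InjOn (fv f1 f2 i) (Erect l r i))
    (hfim : ∀ i, fv f1 f2 i '' Erect l r i = Sstrip b t i)
    (hJpos : ∀ i, ∀ z ∈ Erect l r i, 0 < Jac f1 f2 i z)
    (hG1E : ∀ i j, i ≠ j → interior (Erect l r i) ∩ interior (Erect l r j) = ∅)
    (hG1S : ∀ i j, i ≠ j → interior (Sstrip b t i) ∩ interior (Sstrip b t j) = ∅)
    (hG2 : volume (Q2 \ ⋃ i, interior (Erect l r i)) = 0)
    (hG3 : Summable (fun i => deltaMax l r i * Real.log (1 / deltaMin l r i)))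
    (hH1 : ∀ i, ∀ z ∈ Erect l r i,
      |Dx (f2 i) z| + α * |Dy (f2 i) z| + α ^ 2 * |Dy (f1 i) z| ≤ α * |Dx (f1 i) z|)
    (hH2 : ∀ i, ∀ z ∈ Erect l r i, K₀ ≤ |Dx (f1 i) z| - α * |Dy (f1 i) z|)
    (hH3 : ∀ i, ∀ z ∈ Erect l r i,
      |Dy (f1 i) z| + α * |Dy (f2 i) z| + α ^ 2 * |Dx (f2 i) z| ≤ α * |Dx (f1 i) z|)
    (hH4 : ∀ i, ∀ z ∈ Erect l r i, Jac f1 f2 i z * K₀ ≤ |Dx (f1 i) z| - α * |Dx (f2 i) z|)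
    (hH5 : 1 / K₀ ^ 2 + α ^ 2 < 1)
    (C₀ : ℝ) (hC₀ : 0 < C₀)
    (hD2 : ∀ i, ∀ z ∈ Erect l r i, D2max f1 f2 i z ≤ C₀ * |Dx (f1 i) z|)
    (yu : (ℤ → ℕ) → ℝ → ℝ) (zp : (ℤ → ℕ) → ℝ × ℝ)
    (hyu1 : ∀ ω : ℤ → ℕ, ContDiffOn ℝ 1 (yu ω) (Set.Icc (0:ℝ) 1))
    (hyu2 : ∀ ω : ℤ → ℕ, ∀ x ∈ Set.Icc (0:ℝ) 1,
      |derivWithin (yu ω) (Set.Icc (0:ℝ) 1) x| ≤ α)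
    (hyu3 : ∀ ω : ℤ → ℕ,
      (⋂ m : ℕ, Sfin l r f1 f2 (fun k => ω (-(k : ℤ) - 1)) (m + 1))
        = (fun x => (x, yu ω x)) '' Set.Icc (0:ℝ) 1)
    (hzp : ∀ ω : ℤ → ℕ,
      (⋂ m : ℕ, ⋂ n : ℕ,
        Sfin l r f1 f2 (fun k => ω (-(k : ℤ) - 1)) (m + 1) ∩
          Efin l r f1 f2 (fun k => ω (k : ℤ)) (n + 1)) = {zp ω})
    :
    ∃ C : ℝ, 0 < C ∧
      ∀ ω ω' : ℤ → ℕ, ω 0 = ω' 0 →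
        |Real.log (DuF f1 yu zp ω) - Real.log (DuF f1 yu zp ω')| ≤ C ∧
        DuF f1 yu zp ω ≤ C * DuF f1 yu zp ω' :=
  logDuF_bounded_variation_on_Ei_general α K₀ hα0 hα1 hK l r f1 f2 hl hr hl' hr' hlr hEQ hfsm hH2
    hH3 C₀ hC₀ hD2 yu zp hyu2 hzp
end
end
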